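/- As formal power series in q: 1/(q;q)_∞ · Σ_{n₁,n₂≥1} (q;q)_{n₁-1}²(q;q)_{n₂-1}² q^{n₁+n₂}/((q;q)_{n₁}(q;q)_{n₂}(q;q)_{n₁+n₂}) = Σ_{n₁≥1} [q^{n₁}/(1-q^{n₁})² · 1/(q^{n₁+1};q)_∞] · Σ_{n₂≥1} [q^{n₂}/(1-q^{n₂})² · 1/((1-q^{n₂+1})⋯(1-q^{n₂+n₁}))]. -/

import Mathlib

open scoped BigOperators

/-- The finite q-Pochhammer symbol `(x;q)_n = ∏_{k=0}^{n-1} (1 - x q^k)`. -/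
noncomputable def qPoch (x q : ℂ) (n : ℕ) : ℂ := ∏ k ∈ Finset.range n, (1 - x * q ^ k)

/-- The infinite q-Pochhammer symbol `(x;q)_∞ = ∏_{k≥0} (1 - x q^k)`. -/
noncomputable def qPochInf (x q : ℂ) : ℂ := ∏' k : ℕ, (1 - x * q ^ k)

/-- `p(n)`, the number of partitions of `n`. -/
def partitionCount (n : ℕ) : ℕ := Fintype.card (Nat.Partition n)

/-- The smallest part of a partition (0 for the empty partition). -/
def minPart {n : ℕ} (P : Nat.Partition n) : ℕ := (P.parts.sort (· ≤ ·)).headD 0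

/-- The rank of a partition: largest part minus number of parts. -/
def rank {n : ℕ} (P : Nat.Partition n) : ℤ := (P.parts.sup : ℤ) - P.parts.card

/-- `N(m,n)`, the number of partitions of `n` with rank `m`. -/
def rankCount (m : ℤ) (n : ℕ) : ℕ := Fintype.card {P : Nat.Partition n // rank P = m}

/-- Dyson's crank of a partition. -/
def crank {n : ℕ} (P : Nat.Partition n) : ℤ :=
  let ω := P.parts.count 1
  if ω = 0 then (P.parts.sup : ℤ)
  else ((P.parts.filter (fun x => ω < x)).card : ℤ) - ω

/-- `M(m,n)`, the number of partitions of `n` with crank `m`. -/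
def crankCount (m : ℤ) (n : ℕ) : ℕ := Fintype.card {P : Nat.Partition n // crank P = m}

/-- `spt(n)`: total number of appearances of the smallest part in all partitions of `n`. -/
def spt (n : ℕ) : ℕ := ∑ P : Nat.Partition n, P.parts.count (minPart P)

/-!
The identity holds summand by summand. Splitting off the first factors,
`(q;q)_∞ = (q;q)_{n₁} (q^{n₁+1};q)_∞` and `(q;q)_{n₁+n₂} = (q;q)_{n₂} (q^{n₂+1};q)_{n₁}`, while
`(q;q)_n = (q;q)_{n-1} (1 - q^n)`; after cancelling, the `(n₁, n₂)` summand on the left is the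
product of the `n₁`-th outer and the `n₂`-th inner summand on the right. Since constant factors
pass through `tsum` in a field, no convergence of the double series is needed.
-/

open Finset

lemma one_sub_pow_ne_zero {q : ℂ} (hq : ‖q‖ < 1) {n : ℕ} (hn : n ≠ 0) : 1 - q ^ n ≠ 0 :=
  sub_ne_zero.2 fun h => (pow_lt_one₀ (norm_nonneg q) hq hn).ne (by rw [← norm_pow, ← h, norm_one])

lemma qPoch_succ (x q : ℂ) (n : ℕ) : qPoch x q (n + 1) = qPoch x q n * (1 - x * q ^ n) :=
  prod_range_succ _ _

lemma qPoch_add (x q : ℂ) (m n : ℕ) :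
    qPoch x q (m + n) = qPoch x q m * qPoch (x * q ^ m) q n := by
  simp only [qPoch, prod_range_add, pow_add, mul_assoc]

lemma qPoch_self_ne_zero {q : ℂ} (hq : ‖q‖ < 1) (n : ℕ) : qPoch q q n ≠ 0 :=
  prod_ne_zero_iff.2 fun k _ => by
    rw [← pow_succ']
    exact one_sub_pow_ne_zero hq k.succ_ne_zero

lemma multipliable_one_sub_mul_pow (x : ℂ) {q : ℂ} (hq : ‖q‖ < 1) :
    Multipliable fun k : ℕ => 1 - x * q ^ k := by
  simpa only [sub_eq_add_neg] using Complex.multipliable_one_add_of_summable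
    ((summable_geometric_of_norm_lt_one hq).mul_left x).neg

lemma qPochInf_eq_qPoch_mul (x : ℂ) {q : ℂ} (hq : ‖q‖ < 1) (m : ℕ) :
    qPochInf x q = qPoch x q m * qPochInf (x * q ^ m) q := by
  have htail : Multipliable fun k => 1 - x * q ^ (k + m) :=
    (multipliable_one_sub_mul_pow (x * q ^ m) hq).congr fun k => by ring
  rw [qPochInf, ← htail.prod_mul_tprod_nat_mul' (f := fun k => 1 - x * q ^ k), qPoch, qPochInf]
  congr 1
  exact tprod_congr fun k => by ring

lemma double_series_summand_eq {q : ℂ} (hq : ‖q‖ < 1) (n₁ n₂ : ℕ) :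
    1 / qPochInf q q *
        ((qPoch q q n₁) ^ 2 * (qPoch q q n₂) ^ 2 * q ^ (n₁ + 1 + (n₂ + 1)) /
          (qPoch q q (n₁ + 1) * qPoch q q (n₂ + 1) * qPoch q q (n₁ + 1 + (n₂ + 1)))) =
      q ^ (n₁ + 1) / (1 - q ^ (n₁ + 1)) ^ 2 * (1 / qPochInf (q ^ (n₁ + 2)) q) *
        (q ^ (n₂ + 1) / (1 - q ^ (n₂ + 1)) ^ 2 * (1 / qPoch (q ^ (n₂ + 2)) q (n₁ + 1))) := by
  have hsplit : qPoch q q (n₁ + 1 + (n₂ + 1)) =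
      qPoch q q (n₂ + 1) * qPoch (q ^ (n₂ + 2)) q (n₁ + 1) := by
    rw [add_comm, qPoch_add, ← pow_succ']
  rw [qPochInf_eq_qPoch_mul q hq (n₁ + 1), ← pow_succ', hsplit]
  -- The tail `(q^{n₁+2};q)_∞` is never zero, but if it were, both sides would be `0` (`1/0 = 0`).
  rcases eq_or_ne (qPochInf (q ^ (n₁ + 2)) q) 0 with hJ | hJ
  · simp [hJ]
  have hZ : qPoch (q ^ (n₂ + 2)) q (n₁ + 1) ≠ 0 :=
    right_ne_zero_of_mul (hsplit ▸ qPoch_self_ne_zero hq (n₁ + 1 + (n₂ + 1)))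
  have hu := one_sub_pow_ne_zero hq n₁.succ_ne_zero
  have hv := one_sub_pow_ne_zero hq n₂.succ_ne_zero
  have hP₁ := qPoch_self_ne_zero hq n₁
  have hP₂ := qPoch_self_ne_zero hq n₂
  simp only [qPoch_succ q q, ← pow_succ']
  field_simp
  ring

/-- Rearrangement of the double series into the `spt`-type product form. -/
theorem double_series_rearrangement (q : ℂ) (hq : ‖q‖ < 1) :
    (1 / qPochInf q q) *
        ∑' n₁ : ℕ, ∑' n₂ : ℕ,
          (qPoch q q n₁) ^ 2 * (qPoch q q n₂) ^ 2 * q ^ (n₁ + 1 + (n₂ + 1)) /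
            (qPoch q q (n₁ + 1) * qPoch q q (n₂ + 1) * qPoch q q (n₁ + 1 + (n₂ + 1))) =
      ∑' n₁ : ℕ,
        (q ^ (n₁ + 1) / (1 - q ^ (n₁ + 1)) ^ 2) * (1 / qPochInf (q ^ (n₁ + 2)) q) *
          ∑' n₂ : ℕ,
            (q ^ (n₂ + 1) / (1 - q ^ (n₂ + 1)) ^ 2) *
              (1 / qPoch (q ^ (n₂ + 2)) q (n₁ + 1)) := by
  rw [← tsum_mul_left]
  refine tsum_congr fun n₁ => ?_
  rw [← tsum_mul_left, ← tsum_mul_left]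
  exact tsum_congr (double_series_summand_eq hq n₁)
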